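/- Let Ξ ⊆ Δ^Ω be nonempty compact and P̂^ω transition matrices indexed by finite Ω. Define c(ξ) = ρ(π, Σ_ω ξ_ω P̂^ω) for fixed policy π. If all per-model occupancy frequencies coincide, i.e., h^ω_π = h_π for all ω ∈ Ω, then c is affine on Ξ and min_{ξ∈Ξ} E_{ω∼ξ}[ρ(π, P̂^ω)] = min_{ξ∈Ξ} ρ(π, Σ_ω ξ_ω P̂^ω), i.e., the static and dynamic soft-robust returns are equal. -/

import Mathlib

/-!
Write `h` for the common occupancy frequency, so that `h ᵥ* (1 - γ • P̂^ω) = p₀` for every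
model `ω`. This equation is affine in the transition matrix, so it also holds for every mixture
`∑ ω, ξ ω • P̂^ω` with `ξ` in the simplex; mixtures of stochastic matrices are stochastic, so
`1 - γ • ∑ ω, ξ ω • P̂^ω` is invertible and `h` is the occupancy frequency of the mixture as well.
Hence every per-model return and every mixture return equals `h ⬝ᵥ r`: `c` is constant on the
simplex, and the static and dynamic objectives agree pointwise on `Ξ`.
-/

open Matrix

namespace Matrix

variable {n : Type*} [DecidableEq n]

section LinftyOpNorm

attribute [local instance] Matrix.linftyOpNormedRing Matrix.linftyOpNormedAlgebra

theorem linfty_opNorm_le_one_of_mem_rowStochastic [Fintype n] {P : Matrix n n ℝ}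
    (hP : P ∈ rowStochastic ℝ n) : ‖P‖ ≤ 1 := by
  rw [linfty_opNorm_def, NNReal.coe_le_one, Finset.sup_le_iff]
  intro i _
  rw [← NNReal.coe_le_one, NNReal.coe_sum]
  simp only [coe_nnnorm, Real.norm_of_nonneg (nonneg_of_mem_rowStochastic hP),
    sum_row_of_mem_rowStochastic hP, le_refl]

/-- The Neumann series `∑ (γ • P) ^ k` converges in the `ℓ∞` operator norm, in which a stochastic
matrix has norm at most one. -/
theorem isUnit_one_sub_smul_of_mem_rowStochastic [Fintype n] {P : Matrix n n ℝ}
    (hP : P ∈ rowStochastic ℝ n) {γ : ℝ} (hγ : |γ| < 1) : IsUnit (1 - γ • P) := by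
  refine isUnit_one_sub_of_norm_lt_one ?_
  calc ‖γ • P‖ ≤ ‖γ‖ * ‖P‖ := norm_smul_le γ P
    _ ≤ |γ| * 1 := by
        rw [Real.norm_eq_abs]
        gcongr
        exact linfty_opNorm_le_one_of_mem_rowStochastic hP
    _ < 1 := by rwa [mul_one]

end LinftyOpNorm

theorem dotProduct_nonsing_inv_mulVec_of_vecMul_eq [Fintype n] {R : Type*} [CommRing R]
    {A : Matrix n n R} (hA : IsUnit A) {h p : n → R} (hh : h ᵥ* A = p) (r : n → R) :
    p ⬝ᵥ A⁻¹ *ᵥ r = h ⬝ᵥ r := by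
  rw [← hh, ← dotProduct_mulVec, mulVec_mulVec,
    mul_nonsing_inv A ((isUnit_iff_isUnit_det A).mp hA), one_mulVec]

theorem one_sub_smul_sum_smul {Ω : Type*} [Fintype Ω] {ξ : Ω → ℝ} (hξ : ∑ ω, ξ ω = 1)
    (γ : ℝ) (P : Ω → Matrix n n ℝ) :
    1 - γ • ∑ ω, ξ ω • P ω = ∑ ω, ξ ω • (1 - γ • P ω) := by
  simp only [smul_sub, Finset.sum_sub_distrib, ← Finset.sum_smul, hξ, one_smul,
    Finset.smul_sum, smul_comm γ]

end Matrix

section Occupancy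

variable {S : Type*} [Fintype S] [DecidableEq S]

noncomputable def discountedReturn (p₀ : S → ℝ) (γ : ℝ) (P : Matrix S S ℝ) (r : S → ℝ) : ℝ :=
  p₀ ⬝ᵥ (1 - γ • P)⁻¹ *ᵥ r

noncomputable def occupancy (p₀ : S → ℝ) (γ : ℝ) (P : Matrix S S ℝ) : S → ℝ :=
  (1 - γ • Pᵀ)⁻¹ *ᵥ p₀

theorem occupancy_eq_vecMul (p₀ : S → ℝ) (γ : ℝ) (P : Matrix S S ℝ) :
    occupancy p₀ γ P = p₀ ᵥ* (1 - γ • P)⁻¹ := by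
  rw [occupancy, ← mulVec_transpose, transpose_nonsing_inv, transpose_sub, transpose_smul,
    transpose_one]

theorem discountedReturn_eq_occupancy_dotProduct (p₀ : S → ℝ) (γ : ℝ) (P : Matrix S S ℝ)
    (r : S → ℝ) : discountedReturn p₀ γ P r = occupancy p₀ γ P ⬝ᵥ r := by
  rw [discountedReturn, occupancy_eq_vecMul, dotProduct_mulVec]

theorem occupancy_vecMul_one_sub_smul {p₀ : S → ℝ} {γ : ℝ} {P : Matrix S S ℝ}
    (hP : IsUnit (1 - γ • P)) : occupancy p₀ γ P ᵥ* (1 - γ • P) = p₀ := by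
  rw [occupancy_eq_vecMul, vecMul_vecMul,
    nonsing_inv_mul _ ((isUnit_iff_isUnit_det _).mp hP), vecMul_one]

theorem discountedReturn_sum_smul_of_occupancy_eq {Ω : Type*} [Fintype Ω]
    {P : Ω → Matrix S S ℝ} (hP : ∀ ω, P ω ∈ rowStochastic ℝ S) {γ : ℝ} (hγ : |γ| < 1)
    {p₀ h : S → ℝ} (hocc : ∀ ω, occupancy p₀ γ (P ω) = h) {ξ : Ω → ℝ}
    (hξ : ξ ∈ stdSimplex ℝ Ω) (r : S → ℝ) :
    discountedReturn p₀ γ (∑ ω, ξ ω • P ω) r = h ⬝ᵥ r := by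
  have hmix : ∑ ω, ξ ω • P ω ∈ rowStochastic ℝ S :=
    (convex_rowStochastic (R := ℝ) (n := S)).sum_mem (fun ω _ => hξ.1 ω) hξ.2
      (fun ω _ => hP ω)
  have hmodel : ∀ ω, h ᵥ* (1 - γ • P ω) = p₀ := fun ω => by
    rw [← hocc ω]
    exact occupancy_vecMul_one_sub_smul (isUnit_one_sub_smul_of_mem_rowStochastic (hP ω) hγ)
  have hh : h ᵥ* (1 - γ • ∑ ω, ξ ω • P ω) = p₀ := by
    simp only [one_sub_smul_sum_smul hξ.2, vecMul_sum, vecMul_smul, hmodel,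
      ← Finset.sum_smul, hξ.2, one_smul]
  exact dotProduct_nonsing_inv_mulVec_of_vecMul_eq
    (isUnit_one_sub_smul_of_mem_rowStochastic hmix hγ) hh r

end Occupancy

theorem stmt_19_general {S Ω : Type*} [Fintype S] [DecidableEq S] [Fintype Ω] [Nonempty Ω]
    (Phat : Ω → Matrix S S ℝ)
    (hPhat : ∀ ω, (∀ s s', 0 ≤ Phat ω s s') ∧ ∀ s, ∑ s', Phat ω s s' = 1)
    (γ : ℝ) (hγ0 : 0 ≤ γ) (hγ1 : γ < 1)
    (p0 : S → ℝ)
    (r : S → ℝ)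
    (Ξ : Set (Ω → ℝ))
    (hΞ : ∀ ξ ∈ Ξ, (∀ ω, 0 ≤ ξ ω) ∧ ∑ ω, ξ ω = 1)
    (c : (Ω → ℝ) → ℝ)
    (hc : c = fun ξ => ∑ s, p0 s * ((1 - γ • (∑ ω, ξ ω • Phat ω))⁻¹).mulVec r s)
    (hocc : ∀ ω1 ω2 : Ω,
      ((1 - γ • (Phat ω1)ᵀ)⁻¹).mulVec p0 = ((1 - γ • (Phat ω2)ᵀ)⁻¹).mulVec p0) :
    (∀ ξ1 ∈ Ξ, ∀ ξ2 ∈ Ξ, ∀ t : ℝ, 0 ≤ t → t ≤ 1 →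
        c (t • ξ1 + (1 - t) • ξ2) = t * c ξ1 + (1 - t) * c ξ2) ∧
    sInf {v : ℝ | ∃ ξ ∈ Ξ, v =
        ∑ ω, ξ ω * ∑ s, p0 s * ((1 - γ • Phat ω)⁻¹).mulVec r s}
      = sInf {v : ℝ | ∃ ξ ∈ Ξ, v = c ξ} := by
  set h := occupancy p0 γ (Phat (Classical.arbitrary Ω))
  have hγ : |γ| < 1 := abs_lt.2 ⟨by linarith, hγ1⟩
  have hstoch : ∀ ω, Phat ω ∈ rowStochastic ℝ S :=
    fun ω => mem_rowStochastic_iff_sum.2 (hPhat ω)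
  have hΞ' : Ξ ⊆ stdSimplex ℝ Ω := hΞ
  have hocc' : ∀ ω, occupancy p0 γ (Phat ω) = h := fun ω => hocc ω _
  have hc_simplex : ∀ ξ ∈ stdSimplex ℝ Ω, c ξ = h ⬝ᵥ r := fun ξ hξ => by
    rw [hc]
    exact discountedReturn_sum_smul_of_occupancy_eq hstoch hγ hocc' hξ r
  have hstatic : ∀ ξ ∈ Ξ, ∑ ω, ξ ω * discountedReturn p0 γ (Phat ω) r = h ⬝ᵥ r := fun ξ hξ => by
    simp only [discountedReturn_eq_occupancy_dotProduct, hocc', ← Finset.sum_mul, (hΞ ξ hξ).2,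
      one_mul]
  refine ⟨fun ξ1 hξ1 ξ2 hξ2 t ht0 ht1 => ?_, congrArg sInf (Set.ext fun v => ?_)⟩
  · rw [hc_simplex _ (convex_stdSimplex ℝ Ω (hΞ' hξ1) (hΞ' hξ2) ht0 (by linarith) (by ring)),
      hc_simplex _ (hΞ' hξ1), hc_simplex _ (hΞ' hξ2)]
    ring
  · refine exists_congr fun ξ => and_congr_right fun hξ => ?_
    rw [hc_simplex ξ (hΞ' hξ), ← hstatic ξ hξ]
    rfl

/-- If all per-model occupancy frequencies coincide, then the mixture-return
map `c(ξ) = ρ(π, Σ_ω ξ_ω P̂^ω)` is affine, and the static and dynamic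
soft-robust returns are equal. -/
theorem stmt_19 {S Ω : Type*} [Fintype S] [DecidableEq S] [Fintype Ω] [Nonempty Ω]
    (Phat : Ω → Matrix S S ℝ)
    (hPhat : ∀ ω, (∀ s s', 0 ≤ Phat ω s s') ∧ ∀ s, ∑ s', Phat ω s s' = 1)
    (γ : ℝ) (hγ0 : 0 ≤ γ) (hγ1 : γ < 1)
    (p0 : S → ℝ) (hp00 : ∀ s, 0 ≤ p0 s) (hp01 : ∑ s, p0 s = 1)
    (r : S → ℝ)
    (Ξ : Set (Ω → ℝ)) (hΞne : Ξ.Nonempty) (hΞc : IsCompact Ξ)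
    (hΞ : ∀ ξ ∈ Ξ, (∀ ω, 0 ≤ ξ ω) ∧ ∑ ω, ξ ω = 1)
    (c : (Ω → ℝ) → ℝ)
    (hc : c = fun ξ => ∑ s, p0 s * ((1 - γ • (∑ ω, ξ ω • Phat ω))⁻¹).mulVec r s)
    (hocc : ∀ ω1 ω2 : Ω,
      ((1 - γ • (Phat ω1)ᵀ)⁻¹).mulVec p0 = ((1 - γ • (Phat ω2)ᵀ)⁻¹).mulVec p0) :
    (∀ ξ1 ∈ Ξ, ∀ ξ2 ∈ Ξ, ∀ t : ℝ, 0 ≤ t → t ≤ 1 →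
        c (t • ξ1 + (1 - t) • ξ2) = t * c ξ1 + (1 - t) * c ξ2) ∧
    sInf {v : ℝ | ∃ ξ ∈ Ξ, v =
        ∑ ω, ξ ω * ∑ s, p0 s * ((1 - γ • Phat ω)⁻¹).mulVec r s}
      = sInf {v : ℝ | ∃ ξ ∈ Ξ, v = c ξ} :=
  stmt_19_general Phat hPhat γ hγ0 hγ1 p0 r Ξ hΞ c hc hocc
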